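/- Let K₀ and K₁ denote the subspaces of L_{2,|r|}(-1,1) consisting of functions vanishing a.e. outside (-1/2,1/2), respectively vanishing a.e. on (-1/2,1/2), and let P₀, P₁ be the orthogonal projections onto K₀, K₁. Let W₀ be a bounded linear operator on L_{2,|r|}(-1,1) such that J₀W₀ - I is nonnegative on the Hilbert space L_{2,|r|}(-1,1), (W₀f)(x) = (J₀f)(x) for almost every x with 1/2 ≤ |x| ≤ 1 for all f, and W₀ maps F_max into F_max. Let W₋₁ be a bounded linear operator on L_{2,|r|}(-1,1) such that J₀W₋₁ - I is nonnegative, (W₋₁f)(x) = (J₀f)(x) for almost every x with -1/2 ≤ x ≤ 1 for all f, for every f ∈ F_max the restrictions of W₋₁f to [-1,0] and [0,1] lie in F_max([-1,0]) and F_max([0,1]) respectively, and (W₋₁f)(-1) = f(-1) for all f ∈ F_max. Then: K₀ and K₁ are invariant under both W₀ and W₋₁; and the operator W₀₁ := W₀P₀ + W₋₁P₁ is bounded and boundedly invertible on L_{2,|r|}(-1,1), with J₀W₀₁ - I nonnegative (so W₀₁ is positive in the Krein space: [W₀₁f, f] > 0 for all f ≠ 0), W₀₁ maps F_max into F_max,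 and (W₀₁f)(-1) = f(-1) and (W₀₁f)(1) = f(1) for all f ∈ F_max. -/

import Mathlib

open MeasureTheory Set Filter

noncomputable section

namespace SL

/-- The measure `|r(x)| dx` on the set `I ⊆ ℝ`; `L_{2,|r|}(I) = Lp ℂ 2 (wM r I)`. -/
def wM (r : ℝ → ℝ) (I : Set ℝ) : Measure ℝ :=
  (volume.restrict I).withDensity fun x => ENNReal.ofReal |r x|

/-- `g` is absolutely continuous on `[a,b]` with (a.e.) derivative `g'`,
encoded via the fundamental theorem of calculus. -/
def ACOn (g g' : ℝ → ℂ) (a b : ℝ) : Prop :=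
  IntervalIntegrable g' volume a b ∧
    ∀ x ∈ Set.Icc a b, g x = g a + ∫ t in a..x, g' t

/-- The function `g` belongs to `F_max([a,b])`: it is square integrable with respect to
`|r| dx` on `[a,b]` and has a representative `g₀`, absolutely continuous on `[a,b]`,
with `∫_a^b p |g₀'|² < ∞`. -/
def InFmax (p r : ℝ → ℝ) (a b : ℝ) (g : ℝ → ℂ) : Prop :=
  MemLp g 2 (wM r (Set.Icc a b)) ∧
    ∃ g₀ g' : ℝ → ℂ, (g =ᵐ[wM r (Set.Icc a b)] g₀) ∧ ACOn g₀ g' a b ∧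
      IntegrableOn (fun x => p x * ‖g' x‖ ^ 2) (Set.Icc a b)

/-- Standing assumptions on the coefficients of the Sturm–Liouville equation. -/
def Coeffs (p q r : ℝ → ℝ) : Prop :=
  IntegrableOn (fun x => 1 / p x) (Set.Icc (-1 : ℝ) 1) ∧
  IntegrableOn q (Set.Icc (-1 : ℝ) 1) ∧
  IntegrableOn r (Set.Icc (-1 : ℝ) 1) ∧
  ∀ᵐ x ∂(volume.restrict (Set.Icc (-1 : ℝ) 1)), 0 < p x ∧ 0 < x * r x

/-- `h` is a half-neighborhood of `a` (contained in `[-1,1]`): a closed interval of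
nonzero length with `a` as an endpoint. -/
def IsHalfNbhd (h : Set ℝ) (a : ℝ) : Prop :=
  (∃ c, -1 ≤ c ∧ c < a ∧ a ≤ 1 ∧ h = Set.Icc c a) ∨
  (∃ d, -1 ≤ a ∧ a < d ∧ d ≤ 1 ∧ h = Set.Icc a d)

/-- The ordered pair of half-neighborhoods `(ha, hb)` of `a` resp. `b` is smoothly
connected with parameters `α', β', ρ0 = ρ(0)`; the affine functions are
`α t = a + α' t` and `β t = b + β' t`. -/
def SmoothlyConnectedOn (p r : ℝ → ℝ) (ha hb : Set ℝ) (a b α' β' ρ0 : ℝ) : Prop :=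
  α' ≠ 0 ∧ β' ≠ 0 ∧
  ∃ (ε τ : ℝ) (ρ ϖ : ℝ → ℝ),
    0 < ε ∧ 0 < τ ∧
    (∀ t ∈ Set.Icc (0 : ℝ) ε, a + α' * t ∈ ha) ∧
    (∀ t ∈ Set.Icc (0 : ℝ) ε, b + β' * t ∈ hb) ∧
    (∀ t ∈ Set.Icc (0 : ℝ) ε, 0 ≤ ρ t) ∧
    (∀ t ∈ Set.Icc (0 : ℝ) ε, 0 ≤ ϖ t) ∧
    ρ 0 = ρ0 ∧
    (∀ c ∈ Set.Ioc (0 : ℝ) ε, IntegrableOn (fun t => p (a + α' * t)) (Set.Icc c ε)) ∧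
    (∀ c ∈ Set.Ioc (0 : ℝ) ε, IntegrableOn (fun t => p (b + β' * t)) (Set.Icc c ε)) ∧
    InFmax p r (min a (a + α' * ε)) (max a (a + α' * ε))
      (fun x => ((ρ ((x - a) / α') : ℝ) : ℂ)) ∧
    (∀ᵐ t ∂(volume.restrict (Set.Icc (0 : ℝ) ε)), 1 / τ < ϖ t ∧ ϖ t < τ) ∧
    (∀ t ∈ Set.Ioc (0 : ℝ) ε, ρ t = |r (b + β' * t)| / |r (a + α' * t)|) ∧
    (∀ t ∈ Set.Ioc (0 : ℝ) ε, ϖ t = p (b + β' * t) / p (a + α' * t))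

/-- Condition at `0`: some ordered pair of half-neighborhoods of `0` is smoothly
connected with parameters satisfying `|α₀'| ≠ |β₀'|·ρ₀(0)`. -/
def CondAt0 (p r : ℝ → ℝ) : Prop :=
  ∃ (ha hb : Set ℝ) (α' β' ρ0 : ℝ), IsHalfNbhd ha 0 ∧ IsHalfNbhd hb 0 ∧
    SmoothlyConnectedOn p r ha hb 0 0 α' β' ρ0 ∧ |α'| ≠ |β'| * ρ0

/-- Condition at `-1`. -/
def CondAtNeg1 (p r : ℝ → ℝ) : Prop :=
  ∃ (ha hb : Set ℝ) (α' β' ρ0 : ℝ), IsHalfNbhd ha (-1) ∧ IsHalfNbhd hb (-1) ∧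
    SmoothlyConnectedOn p r ha hb (-1) (-1) α' β' ρ0 ∧ |α'| ≠ |β'| * ρ0

/-- Condition at `1`. -/
def CondAt1 (p r : ℝ → ℝ) : Prop :=
  ∃ (ha hb : Set ℝ) (α' β' ρ0 : ℝ), IsHalfNbhd ha 1 ∧ IsHalfNbhd hb 1 ∧
    SmoothlyConnectedOn p r ha hb 1 1 α' β' ρ0 ∧ |α'| ≠ |β'| * ρ0

/-- The Krein inner product `[f,g] = ∫_{-1}^1 f conj(g) r dx` on `L_{2,r}(-1,1)`. -/
def krein0 (r : ℝ → ℝ) (f g : ℝ → ℂ) : ℂ :=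
  ∫ x in Set.Icc (-1 : ℝ) 1, f x * (starRingEnd ℂ) (g x) * (r x : ℂ)

end SL
namespace SL

/-- The Hilbert space `L_{2,|r|}(-1,1)`. -/
abbrev Pa (r : ℝ → ℝ) := Lp ℂ 2 (wM r (Set.Icc (-1 : ℝ) 1))

end SL
namespace SL

/-- Membership in `K₀`: the subspace of `L_{2,|r|}(-1,1)` of functions vanishing a.e.
outside `(-1/2, 1/2)`. -/
def InK0 (r : ℝ → ℝ) (f : Pa r) : Prop :=
  ∀ᵐ x ∂(wM r (Set.Icc (-1 : ℝ) 1)),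
    x ∉ Set.Ioo (-(1 / 2) : ℝ) (1 / 2) → (f : ℝ → ℂ) x = 0

/-- Membership in `K₁`: the subspace of `L_{2,|r|}(-1,1)` of functions vanishing a.e.
on `(-1/2, 1/2)`. -/
def InK1 (r : ℝ → ℝ) (f : Pa r) : Prop :=
  ∀ᵐ x ∂(wM r (Set.Icc (-1 : ℝ) 1)),
    x ∈ Set.Ioo (-(1 / 2) : ℝ) (1 / 2) → (f : ℝ → ℂ) x = 0

/-!
Write `J₀` for multiplication by `sgn x`. Since `[u, g] = ⟪g, J₀ u⟫`, the hypothesis "`J₀W - I`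
is nonnegative" is the operator inequality `1 ≤ J₀ W`. In particular `J₀W - I` is selfadjoint;
its range consists of functions vanishing where `W` acts as `J₀`, so it annihilates every
function supported there. Hence `W₀ = J₀` on `K₁` and `W₋₁ = J₀` on `K₀`, which gives the
invariance of `K₀, K₁` and the identity `W₀₁ = W₀ + W₋₁ - J₀`. Therefore
`J₀W₀₁ - I = (J₀W₀ - I) + (J₀W₋₁ - I) ≥ 0`, and an operator `A ≥ 1` on a Hilbert space is
invertible, hence so is `W₀₁ = J₀ (J₀W₀₁)`.

For `f ∈ F_max`, the function `W₋₁f - J₀f` vanishes on `[-1/2, 1]` and equals `W₋₁f + f` on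
`[-1, 0]`, so `W₀₁f = W₀f + (W₋₁f - J₀f)` is absolutely continuous. Near `-1` it coincides with
`W₋₁f`, near `1` with `f`, which gives the boundary values.
-/

section WeightedMeasure

variable {r : ℝ → ℝ} {s t : Set ℝ}

lemma wM_restrict (ht : MeasurableSet t) : (wM r s).restrict t = wM r (t ∩ s) := by
  rw [wM, restrict_withDensity ht, Measure.restrict_restrict ht, wM]

lemma ae_wM_iff_of_subset (ht : MeasurableSet t) (hts : t ⊆ s) {P : ℝ → Prop} :
    (∀ᵐ x ∂wM r t, P x) ↔ ∀ᵐ x ∂wM r s, x ∈ t → P x := by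
  rw [← ae_restrict_iff' ht, wM_restrict ht, inter_eq_left.2 hts]

lemma ae_wM_of_ae_restrict {P : ℝ → Prop} (h : ∀ᵐ x ∂volume.restrict s, P x) :
    ∀ᵐ x ∂wM r s, P x :=
  withDensity_absolutelyContinuous _ _ |>.ae_le h

lemma ae_restrict_of_ae_wM (hr : AEMeasurable r (volume.restrict s))
    (hr0 : ∀ᵐ x ∂volume.restrict s, r x ≠ 0) {P : ℝ → Prop} (h : ∀ᵐ x ∂wM r s, P x) :
    ∀ᵐ x ∂volume.restrict s, P x := by
  rw [wM, ae_withDensity_iff' hr.abs.ennreal_ofReal] at h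
  filter_upwards [h, hr0] with x hx hx0
  exact hx (by simpa using hx0)

lemma ae_wM_ne_zero (s : Set ℝ) : ∀ᵐ x ∂wM r s, x ≠ 0 :=
  ae_wM_of_ae_restrict (ae_restrict_of_ae (Measure.ae_ne volume 0))

lemma integral_wM (hr : AEMeasurable r (volume.restrict s)) (g : ℝ → ℂ) :
    ∫ x, g x ∂wM r s = ∫ x in s, |r x| • g x := by
  rw [wM, integral_withDensity_eq_integral_toReal_smul₀ hr.abs.ennreal_ofReal
    (ae_of_all _ fun _ => ENNReal.ofReal_lt_top)]
  simp_rw [ENNReal.toReal_ofReal (abs_nonneg _)]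

lemma eqOn_of_ae_wM (hr : AEMeasurable r (volume.restrict s))
    (hr0 : ∀ᵐ x ∂volume.restrict s, r x ≠ 0) {a b : ℝ} (hab : a < b) (hsub : Icc a b ⊆ s)
    {u v : ℝ → ℂ} (hu : ContinuousOn u (Icc a b)) (hv : ContinuousOn v (Icc a b))
    (h : ∀ᵐ x ∂wM r s, x ∈ Icc a b → u x = v x) : EqOn u v (Icc a b) :=
  Measure.eqOn_Icc_of_ae_eq volume hab.ne
    (ae_restrict_of_ae_wM (hr.mono_measure (Measure.restrict_mono hsub le_rfl))
      (ae_restrict_of_ae_restrict_of_subset hsub hr0)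
      ((ae_wM_iff_of_subset measurableSet_Icc hsub).2 h)) hu hv

end WeightedMeasure

section Coeffs

variable {p q r : ℝ → ℝ}

lemma Coeffs.aemeasurable_weight (hc : Coeffs p q r) :
    AEMeasurable r (volume.restrict (Icc (-1 : ℝ) 1)) :=
  hc.2.2.1.aemeasurable

lemma Coeffs.ae_mul_weight_pos (hc : Coeffs p q r) :
    ∀ᵐ x ∂volume.restrict (Icc (-1 : ℝ) 1), 0 < x * r x :=
  hc.2.2.2.mono fun _ hx => hx.2

lemma Coeffs.ae_weight_ne_zero (hc : Coeffs p q r) :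
    ∀ᵐ x ∂volume.restrict (Icc (-1 : ℝ) 1), r x ≠ 0 :=
  hc.ae_mul_weight_pos.mono fun _ hx h0 => by simp [h0] at hx

lemma Coeffs.ae_nonneg (hc : Coeffs p q r) :
    ∀ᵐ x ∂volume.restrict (Icc (-1 : ℝ) 1), 0 ≤ p x :=
  hc.2.2.2.mono fun _ hx => hx.1.le

lemma Coeffs.aestronglyMeasurable (hc : Coeffs p q r) :
    AEStronglyMeasurable p (volume.restrict (Icc (-1 : ℝ) 1)) := by
  simpa [Pi.inv_def] using hc.1.aemeasurable.inv.aestronglyMeasurable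

end Coeffs

section RealSign

lemma measurable_real_sign : Measurable Real.sign :=
  Measurable.ite (measurableSet_lt measurable_id measurable_const) measurable_const <|
    Measurable.ite (measurableSet_lt measurable_const measurable_id) measurable_const
      measurable_const

lemma norm_real_sign_le (x : ℝ) : ‖(Real.sign x : ℂ)‖ ≤ 1 := by
  rcases Real.sign_apply_eq x with h | h | h <;> simp [h]

lemma real_sign_mul_self {x : ℝ} (hx : x ≠ 0) : (Real.sign x : ℂ) * Real.sign x = 1 := by
  rcases Real.sign_apply_eq_of_ne_zero x hx with h | h <;> simp [h]

lemma real_sign_eq_of_mul_pos {x y : ℝ} (h : 0 < x * y) : Real.sign y = Real.sign x := by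
  rcases lt_trichotomy x 0 with hx | rfl | hx
  · rw [Real.sign_of_neg hx, Real.sign_of_neg (neg_of_mul_pos_right h hx.le)]
  · simp at h
  · rw [Real.sign_of_pos hx, Real.sign_of_pos (pos_of_mul_pos_right h hx.le)]

lemma real_sign_mul_abs_of_mul_pos {x y : ℝ} (h : 0 < x * y) : Real.sign x * |y| = y := by
  rcases lt_trichotomy x 0 with hx | rfl | hx
  · rw [Real.sign_of_neg hx, abs_of_neg (neg_of_mul_pos_right h hx.le)]; ring
  · simp at h
  · rw [Real.sign_of_pos hx, abs_of_pos (pos_of_mul_pos_right h hx.le)]; ring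

end RealSign

def signLp (μ : Measure ℝ) : Lp ℂ ⊤ μ :=
  (memLp_top_of_bound (Complex.measurable_ofReal.comp measurable_real_sign).aestronglyMeasurable
    1 (ae_of_all _ norm_real_sign_le)).toLp fun x => (Real.sign x : ℂ)

lemma coeFn_signLp (μ : Measure ℝ) : signLp μ =ᵐ[μ] fun x => (Real.sign x : ℂ) :=
  MemLp.coeFn_toLp _

/-- The fundamental symmetry, built from `sgn x` rather than `sgn (r x)`: the two agree a.e.
under `Coeffs`, and `sgn x` is measurable whatever `r` is. -/
def J₀ (r : ℝ → ℝ) : Pa r →L[ℂ] Pa r :=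
  (ContinuousLinearMap.mul ℂ ℂ).holderL _ ⊤ 2 2 (signLp _)

section FundamentalSymmetry

open scoped InnerProductSpace ComplexConjugate

variable {r : ℝ → ℝ}

lemma coeFn_J₀ (f : Pa r) :
    J₀ r f =ᵐ[wM r (Icc (-1) 1)] fun x => (Real.sign x : ℂ) * f x := by
  filter_upwards [(ContinuousLinearMap.mul ℂ ℂ).coeFn_holder (r := 2) (signLp _) f,
    coeFn_signLp (wM r (Icc (-1) 1))] with x h1 h2
  rw [J₀, ContinuousLinearMap.holderL_apply_apply, h1, h2, ContinuousLinearMap.mul_apply']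

lemma J₀_J₀ (f : Pa r) : J₀ r (J₀ r f) = f := by
  refine Lp.ext ?_
  filter_upwards [coeFn_J₀ (J₀ r f), coeFn_J₀ f, ae_wM_ne_zero _] with x h1 h2 hx
  rw [h1, h2, ← mul_assoc, real_sign_mul_self hx, one_mul]

lemma J₀_mul_self : J₀ r * J₀ r = 1 :=
  ContinuousLinearMap.ext J₀_J₀

lemma krein0_eq_inner (hr : AEMeasurable r (volume.restrict (Icc (-1) 1)))
    (hxr : ∀ᵐ x ∂volume.restrict (Icc (-1 : ℝ) 1), 0 < x * r x) (u g : Pa r) :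
    krein0 r u g = ⟪g, J₀ r u⟫_ℂ :=
  calc krein0 r u g
      = ∫ x in Icc (-1) 1, |r x| • ((Real.sign x : ℂ) * u x * conj (g x)) := by
        refine integral_congr_ae ?_
        filter_upwards [hxr] with x hx
        have hrx : (r x : ℂ) = Real.sign x * |r x| := by
          exact_mod_cast (real_sign_mul_abs_of_mul_pos hx).symm
        rw [Complex.real_smul, hrx]
        ring
    _ = ⟪g, J₀ r u⟫_ℂ := by
        rw [← integral_wM hr, L2.inner_def]
        refine integral_congr_ae ?_
        filter_upwards [coeFn_J₀ u] with x hx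
        rw [RCLike.inner_apply, hx]

lemma one_le_J₀_mul_iff (hr : AEMeasurable r (volume.restrict (Icc (-1) 1)))
    (hxr : ∀ᵐ x ∂volume.restrict (Icc (-1 : ℝ) 1), 0 < x * r x) (W : Pa r →L[ℂ] Pa r) :
    1 ≤ J₀ r * W ↔
      ∀ f : Pa r, (krein0 r (W f) f).im = 0 ∧ ‖f‖ ^ 2 ≤ (krein0 r (W f) f).re := by
  rw [ContinuousLinearMap.le_def, ContinuousLinearMap.isPositive_iff_complex]
  refine forall_congr' fun f => ?_
  have h : ⟪(J₀ r * W - 1) f, f⟫_ℂ = conj (krein0 r (W f) f) - (‖f‖ ^ 2 : ℝ) := by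
    rw [krein0_eq_inner hr hxr, inner_conj_symm, show (J₀ r * W - 1) f = J₀ r (W f) - f from rfl,
      inner_sub_left, inner_self_eq_norm_sq_to_K]
    norm_cast
  rw [h, Complex.ext_iff]
  simp only [RCLike.re_to_complex, Complex.sub_re, Complex.conj_re, Complex.ofReal_re,
    Complex.ofReal_im, Complex.sub_im, Complex.conj_im, sub_nonneg]
  constructor
  · rintro ⟨⟨-, him⟩, hre⟩
    exact ⟨by linarith, hre⟩
  · rintro ⟨him, hre⟩
    exact ⟨⟨trivial, by linarith⟩, hre⟩

end FundamentalSymmetry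

section Localization

open scoped InnerProductSpace

variable {r : ℝ → ℝ}

def VanishesOn (f : Pa r) (A : Set ℝ) : Prop :=
  ∀ᵐ x ∂wM r (Icc (-1) 1), x ∈ A → f x = 0

def EqJ₀On (W : Pa r →L[ℂ] Pa r) (A : Set ℝ) : Prop :=
  ∀ f : Pa r, ∀ᵐ x ∂wM r (Icc (-1) 1), x ∈ A → W f x = J₀ r f x

variable {A B : Set ℝ} {f g : Pa r} {W : Pa r →L[ℂ] Pa r}

lemma VanishesOn.mono (hf : VanishesOn f A) (hBA : B ⊆ A) : VanishesOn f B :=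
  Filter.Eventually.mono hf fun _ hx hxB => hx (hBA hxB)

lemma EqJ₀On.mono (hW : EqJ₀On W A) (hBA : B ⊆ A) : EqJ₀On W B :=
  fun f => (hW f).mono fun _ hx hxB => hx (hBA hxB)

lemma VanishesOn.J₀ (hf : VanishesOn f A) : VanishesOn (J₀ r f) A := by
  filter_upwards [hf, coeFn_J₀ f] with x hx hJ hxA
  rw [hJ, hx hxA, mul_zero]

lemma EqJ₀On.vanishesOn (hW : EqJ₀On W A) (hf : VanishesOn f A) : VanishesOn (W f) A := by
  filter_upwards [hW f, hf.J₀] with x hW hJ hxA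
  rw [hW hxA, hJ hxA]

lemma inner_eq_zero_of_vanishesOn (hf : VanishesOn f A) (hg : VanishesOn g Aᶜ) :
    ⟪f, g⟫_ℂ = 0 := by
  rw [L2.inner_def]
  refine integral_eq_zero_of_ae ?_
  filter_upwards [hf, hg] with x hfx hgx
  by_cases hx : x ∈ A
  · simp [hfx hx]
  · simp [hgx hx]

lemma EqJ₀On.vanishesOn_J₀_sub (hW : EqJ₀On W A) (f : Pa r) :
    VanishesOn (J₀ r (W f) - f) A := by
  filter_upwards [Lp.coeFn_sub (J₀ r (W f)) f, coeFn_J₀ (W f), hW f, coeFn_J₀ f,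
    ae_wM_ne_zero _] with x hsub hJW hWf hJ hx0 hxA
  rw [hsub, Pi.sub_apply, hJW, hWf hxA, hJ, ← mul_assoc, real_sign_mul_self hx0, one_mul, sub_self]

/-- `J₀W - I` is selfadjoint and its range vanishes off `A`, so it annihilates functions
vanishing on `A`. -/
lemma EqJ₀On.apply_eq_of_vanishesOn (hW1 : 1 ≤ J₀ r * W) (hW : EqJ₀On W Aᶜ)
    (hg : VanishesOn g A) : W g = J₀ r g := by
  set T := J₀ r * W - 1
  have hT : (T : Pa r →ₗ[ℂ] Pa r).IsSymmetric :=
    ((ContinuousLinearMap.le_def _ _).1 hW1).isSymmetric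
  have hg_perp : g ∈ (LinearMap.range (T : Pa r →ₗ[ℂ] Pa r))ᗮ := by
    rw [Submodule.mem_orthogonal]
    rintro _ ⟨k, rfl⟩
    exact inner_eq_zero_of_vanishesOn (hW.vanishesOn_J₀_sub k) (by rwa [compl_compl])
  have hTg : J₀ r (W g) - g = 0 := by
    rwa [hT.orthogonal_range] at hg_perp
  calc W g = J₀ r (J₀ r (W g)) := (J₀_J₀ _).symm
    _ = J₀ r g := by rw [sub_eq_zero.1 hTg]

lemma eqJ₀On_of_ae_sign (hxr : ∀ᵐ x ∂volume.restrict (Icc (-1 : ℝ) 1), 0 < x * r x)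
    (hW : ∀ f : Pa r, ∀ᵐ x ∂wM r (Icc (-1) 1), x ∈ A → W f x = (Real.sign (r x) : ℂ) * f x) :
    EqJ₀On W A := fun f => by
  filter_upwards [hW f, coeFn_J₀ f, ae_wM_of_ae_restrict hxr] with x hWx hJ hx hxA
  rw [hWx hxA, hJ, real_sign_eq_of_mul_pos hx]

end Localization

section Operators

lemma mul_add_mul_eq_add_sub {R : Type*} [Ring R] {P₀ P₁ W₀ W₁ J : R} (hP : P₀ + P₁ = 1)
    (h₀ : W₀ * P₁ = J * P₁) (h₁ : W₁ * P₀ = J * P₀) :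
    W₀ * P₀ + W₁ * P₁ = W₀ + W₁ - J :=
  calc W₀ * P₀ + W₁ * P₁ = W₀ * (P₀ + P₁) + W₁ * (P₀ + P₁) - J * (P₁ + P₀) := by
        rw [mul_add J, ← h₀, ← h₁]; noncomm_ring
    _ = W₀ + W₁ - J := by rw [add_comm P₁, hP]; noncomm_ring

variable {r : ℝ → ℝ} {S : Set ℝ} {P₀ P₁ W W₀ W₁ : Pa r →L[ℂ] Pa r}

lemma comp_add_comp_eq_add_sub_J₀ [DecidablePred (· ∈ S)]
    (hP₀ : ∀ f : Pa r, P₀ f =ᵐ[wM r (Icc (-1) 1)] fun x => if x ∈ S then f x else 0)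
    (hP₁ : ∀ f : Pa r, P₁ f =ᵐ[wM r (Icc (-1) 1)] fun x => if x ∈ S then 0 else f x)
    (hW₀ : ∀ g : Pa r, VanishesOn g S → W₀ g = J₀ r g)
    (hW₁ : ∀ g : Pa r, VanishesOn g Sᶜ → W₁ g = J₀ r g) :
    W₀.comp P₀ + W₁.comp P₁ = W₀ + W₁ - J₀ r := by
  have hP : P₀ + P₁ = 1 := by
    ext1 f
    refine Lp.ext ?_
    filter_upwards [Lp.coeFn_add (P₀ f) (P₁ f), hP₀ f, hP₁ f] with x hx h₀ h₁
    change (P₀ f + P₁ f) x = f x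
    rw [hx, Pi.add_apply, h₀, h₁]
    split_ifs <;> simp
  refine mul_add_mul_eq_add_sub hP (ContinuousLinearMap.ext fun f => hW₀ _ ?_)
    (ContinuousLinearMap.ext fun f => hW₁ _ ?_)
  · filter_upwards [hP₁ f] with x hx hxS using hx.trans (if_pos hxS)
  · filter_upwards [hP₀ f] with x hx hxS using hx.trans (if_neg hxS)

lemma one_le_J₀_mul_add_sub (h₀ : 1 ≤ J₀ r * W₀) (h₁ : 1 ≤ J₀ r * W₁) :
    1 ≤ J₀ r * (W₀ + W₁ - J₀ r) := by
  rw [mul_sub, mul_add, J₀_mul_self, add_sub_assoc]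
  exact le_add_of_le_of_nonneg h₀ (sub_nonneg.2 h₁)

lemma isUnit_of_one_le_J₀_mul (h : 1 ≤ J₀ r * W) : IsUnit W := by
  have hJ : IsUnit (J₀ r) := ⟨⟨J₀ r, J₀ r, J₀_mul_self, J₀_mul_self⟩, rfl⟩
  have hJW := hJ.mul (CStarAlgebra.isUnit_of_le 1 h)
  rwa [← mul_assoc, J₀_mul_self, one_mul] at hJW

end Operators

section AbsolutelyContinuous

variable {g g' h h' : ℝ → ℂ} {a b c : ℝ}

lemma ACOn.continuousOn (hg : ACOn g g' a b) (hab : a ≤ b) : ContinuousOn g (Icc a b) := by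
  have hprim := intervalIntegral.continuousOn_primitive_interval' hg.1 left_mem_uIcc
  rw [uIcc_of_le hab] at hprim
  exact (continuousOn_const.add hprim).congr hg.2

lemma ACOn.add (hg : ACOn g g' a b) (hh : ACOn h h' a b) : ACOn (g + h) (g' + h') a b := by
  refine ⟨hg.1.add hh.1, fun x hx => ?_⟩
  have hsub : uIcc a x ⊆ uIcc a b := uIcc_subset_uIcc_left (Icc_subset_uIcc hx)
  simp only [Pi.add_apply]
  rw [intervalIntegral.integral_add (hg.1.mono_set hsub) (hh.1.mono_set hsub), hg.2 x hx,
    hh.2 x hx]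
  ring

lemma ACOn.mono_right (hg : ACOn g g' a b) (hc : c ∈ Icc a b) : ACOn g g' a c :=
  ⟨hg.1.mono_set (uIcc_subset_uIcc_left (Icc_subset_uIcc hc)),
    fun x hx => hg.2 x ⟨hx.1, hx.2.trans hc.2⟩⟩

lemma ACOn.indicator_Iic (hg : ACOn g g' a c) (hgc : g c = 0) (hac : a ≤ c) (hab : a ≤ b) :
    ACOn ((Iic c).indicator g) ((Iic c).indicator g') a b := by
  have hint : IntervalIntegrable ((Iic c).indicator g') volume a b := by
    rw [intervalIntegrable_iff_integrableOn_Icc_of_le hab, IntegrableOn,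
      integrable_indicator_iff measurableSet_Iic, IntegrableOn,
      Measure.restrict_restrict measurableSet_Iic]
    refine (intervalIntegrable_iff_integrableOn_Icc_of_le hac |>.1 hg.1).mono_set ?_
    exact fun x hx => ⟨hx.2.1, hx.1⟩
  refine ⟨hint, fun x hx => ?_⟩
  rw [indicator_of_mem (mem_Iic.2 hac)]
  rcases le_total x c with hxc | hcx
  · have heq : ∫ t in a..x, (Iic c).indicator g' t = ∫ t in a..x, g' t :=
      intervalIntegral.integral_congr fun t ht =>
        indicator_of_mem (mem_Iic.2 ((uIcc_of_le hx.1 ▸ ht).2.trans hxc)) g'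
    rw [indicator_of_mem (mem_Iic.2 hxc), heq, ← hg.2 x ⟨hx.1, hxc⟩]
  · have hind : ∫ t in a..x, (Iic c).indicator g' t = ∫ t in a..c, g' t :=
      intervalIntegral.integral_indicator ⟨hac, hcx⟩
    have hgx : (Iic c).indicator g x = 0 := by
      rcases hcx.eq_or_lt with rfl | hlt
      · rw [indicator_of_mem (mem_Iic.2 le_rfl), hgc]
      · exact indicator_of_notMem (notMem_Iic.2 hlt) g
    rw [hgx, hind, ← hg.2 c ⟨hac, le_rfl⟩, hgc]

lemma ACOn.aestronglyMeasurable_deriv (hg : ACOn g g' a b) (hab : a ≤ b) :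
    AEStronglyMeasurable g' (volume.restrict (Icc a b)) :=
  ((intervalIntegrable_iff_integrableOn_Icc_of_le hab).1 hg.1).aestronglyMeasurable

end AbsolutelyContinuous

section Energy

variable {p : ℝ → ℝ} {u v : ℝ → ℂ} {s : Set ℝ} {a b c : ℝ}

lemma integrableOn_mul_norm_add_sq (hp : ∀ᵐ x ∂volume.restrict s, 0 ≤ p x)
    (hpm : AEStronglyMeasurable p (volume.restrict s))
    (hu : AEStronglyMeasurable u (volume.restrict s))
    (hv : AEStronglyMeasurable v (volume.restrict s))
    (hpu : IntegrableOn (fun x => p x * ‖u x‖ ^ 2) s)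
    (hpv : IntegrableOn (fun x => p x * ‖v x‖ ^ 2) s) :
    IntegrableOn (fun x => p x * ‖u x + v x‖ ^ 2) s := by
  refine Integrable.mono' ((hpu.const_mul 2).add (hpv.const_mul 2))
    (hpm.mul ((hu.add hv).norm.pow 2)) ?_
  filter_upwards [hp] with x hpx
  have h2 : ‖u x + v x‖ ^ 2 ≤ 2 * ‖u x‖ ^ 2 + 2 * ‖v x‖ ^ 2 := by
    nlinarith [norm_add_le (u x) (v x), sq_nonneg (‖u x‖ - ‖v x‖), norm_nonneg (u x + v x)]
  rw [Real.norm_of_nonneg (by positivity), Pi.add_apply]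
  nlinarith [mul_le_mul_of_nonneg_left h2 hpx]

lemma integrableOn_mul_norm_indicator_sq
    (h : IntegrableOn (fun x => p x * ‖u x‖ ^ 2) (Icc a c)) :
    IntegrableOn (fun x => p x * ‖(Iic c).indicator u x‖ ^ 2) (Icc a b) := by
  have heq : (fun x => p x * ‖(Iic c).indicator u x‖ ^ 2) =
      (Iic c).indicator fun x => p x * ‖u x‖ ^ 2 := by
    ext x
    by_cases hx : x ∈ Iic c <;> simp [hx]
  rw [heq, IntegrableOn, integrable_indicator_iff measurableSet_Iic, IntegrableOn,
    Measure.restrict_restrict measurableSet_Iic]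
  exact h.mono_set fun x hx => ⟨hx.2.1, hx.1⟩

end Energy

/-- `InFmax p r a b g` unfolds to `MemLp g _ _ ∧ ∃ g₀ g', g =ᵐ g₀ ∧ FmaxRep p a b g₀ g'`. -/
def FmaxRep (p : ℝ → ℝ) (a b : ℝ) (g g' : ℝ → ℂ) : Prop :=
  ACOn g g' a b ∧ IntegrableOn (fun x => p x * ‖g' x‖ ^ 2) (Icc a b)

section FmaxRep

variable {p : ℝ → ℝ} {g g' h h' : ℝ → ℂ} {a b c : ℝ}

lemma FmaxRep.add (hab : a ≤ b) (hp : ∀ᵐ x ∂volume.restrict (Icc a b), 0 ≤ p x)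
    (hpm : AEStronglyMeasurable p (volume.restrict (Icc a b)))
    (hg : FmaxRep p a b g g') (hh : FmaxRep p a b h h') :
    FmaxRep p a b (g + h) (g' + h') :=
  ⟨hg.1.add hh.1, integrableOn_mul_norm_add_sq hp hpm (hg.1.aestronglyMeasurable_deriv hab)
    (hh.1.aestronglyMeasurable_deriv hab) hg.2 hh.2⟩

lemma FmaxRep.mono_right (hg : FmaxRep p a b g g') (hc : c ∈ Icc a b) : FmaxRep p a c g g' :=
  ⟨hg.1.mono_right hc, hg.2.mono_set (Icc_subset_Icc_right hc.2)⟩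

lemma FmaxRep.indicator_Iic (hg : FmaxRep p a c g g') (hgc : g c = 0) (hac : a ≤ c)
    (hab : a ≤ b) : FmaxRep p a b ((Iic c).indicator g) ((Iic c).indicator g') :=
  ⟨hg.1.indicator_Iic hgc hac hab, integrableOn_mul_norm_indicator_sq hg.2⟩

end FmaxRep

section Glue

variable {p r : ℝ → ℝ}

lemma coeFn_add_sub_J₀ (W₀ W₁ : Pa r →L[ℂ] Pa r) (f : Pa r) :
    (W₀ + W₁ - J₀ r) f =ᵐ[wM r (Icc (-1) 1)] fun x => W₀ f x + W₁ f x - J₀ r f x := by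
  filter_upwards [Lp.coeFn_sub (W₀ f + W₁ f) (J₀ r f), Lp.coeFn_add (W₀ f) (W₁ f)] with x h1 h2
  rw [show (W₀ + W₁ - J₀ r) f = W₀ f + W₁ f - J₀ r f from rfl, h1, Pi.sub_apply, h2,
    Pi.add_apply]

lemma ae_J₀_eq_neg (f : Pa r) {g : ℝ → ℂ} (hfg : f =ᵐ[wM r (Icc (-1) 1)] g) :
    ∀ᵐ x ∂wM r (Icc (-1) 1), x < 0 → J₀ r f x = -g x := by
  filter_upwards [coeFn_J₀ f, hfg] with x hJ hg hx
  rw [hJ, hg, Real.sign_of_neg hx]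
  push_cast
  ring

lemma eq_neg_at_zero_of_eqJ₀On (hr : AEMeasurable r (volume.restrict (Icc (-1 : ℝ) 1)))
    (hr0 : ∀ᵐ x ∂volume.restrict (Icc (-1 : ℝ) 1), r x ≠ 0) {W : Pa r →L[ℂ] Pa r}
    (hW : EqJ₀On W (Ici (-(1 / 2)))) {f : Pa r} {g g' k k' : ℝ → ℂ}
    (hfg : f =ᵐ[wM r (Icc (-1) 1)] g) (hg : ACOn g g' (-1) 1)
    (hWk : ∀ᵐ x ∂wM r (Icc (-1) 1), x ∈ Icc (-1) 0 → W f x = k x) (hk : ACOn k k' (-1) 0) :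
    k 0 = -g 0 := by
  refine eqOn_of_ae_wM hr hr0 (a := -(1 / 2)) (by norm_num)
    (Icc_subset_Icc (by norm_num) zero_le_one)
    ((hk.continuousOn (by norm_num)).mono (Icc_subset_Icc_left (by norm_num)))
    ((hg.continuousOn (by norm_num)).mono (Icc_subset_Icc (by norm_num) zero_le_one)).neg
    ?_ ⟨by norm_num, le_rfl⟩
  filter_upwards [hWk, hW f, ae_J₀_eq_neg f hfg, ae_wM_ne_zero _] with x hkx hWx hJx hx0 hx
  rw [← hkx ⟨by linarith [hx.1], hx.2⟩, hWx hx.1, hJx (hx.2.lt_of_ne hx0), Pi.neg_apply]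

lemma inFmax_add_sub_J₀ (hp : ∀ᵐ x ∂volume.restrict (Icc (-1 : ℝ) 1), 0 ≤ p x)
    (hpm : AEStronglyMeasurable p (volume.restrict (Icc (-1 : ℝ) 1)))
    (hr : AEMeasurable r (volume.restrict (Icc (-1 : ℝ) 1)))
    (hr0 : ∀ᵐ x ∂volume.restrict (Icc (-1 : ℝ) 1), r x ≠ 0)
    {W₀ W₁ : Pa r →L[ℂ] Pa r} (hW₁ : EqJ₀On W₁ (Ici (-(1 / 2)))) {f : Pa r}
    (hf : InFmax p r (-1) 1 f) (hW₀f : InFmax p r (-1) 1 (W₀ f))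
    (hW₁f : InFmax p r (-1) 0 (W₁ f)) :
    InFmax p r (-1) 1 ((W₀ + W₁ - J₀ r) f) := by
  obtain ⟨-, g, g', hfg, hg : FmaxRep p (-1) 1 g g'⟩ := hf
  obtain ⟨-, h, h', hW₀h, hh : FmaxRep p (-1) 1 h h'⟩ := hW₀f
  obtain ⟨-, k, k', hW₁k, hk : FmaxRep p (-1) 0 k k'⟩ := hW₁f
  have hsub : Icc (-1 : ℝ) 0 ⊆ Icc (-1) 1 := Icc_subset_Icc_right zero_le_one
  replace hW₁k := (ae_wM_iff_of_subset measurableSet_Icc hsub).1 hW₁k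
  have hJg := ae_J₀_eq_neg f hfg
  have hkg : k 0 + g 0 = 0 := by
    rw [eq_neg_at_zero_of_eqJ₀On hr hr0 hW₁ hfg hg.1 hW₁k hk.1, neg_add_cancel]
  have hp' := ae_restrict_of_ae_restrict_of_subset hsub hp
  have hpm' := hpm.mono_measure (Measure.restrict_mono hsub le_rfl)
  have hrep := hh.add (by norm_num) hp hpm <|
    (hk.add (by norm_num) hp' hpm' (hg.mono_right ⟨by norm_num, zero_le_one⟩)).indicator_Iic
      hkg (by norm_num) (by norm_num)
  refine ⟨Lp.memLp _, _, _, ?_, hrep⟩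
  filter_upwards [coeFn_add_sub_J₀ W₀ W₁ f, hW₀h, hW₁k, hW₁ f, hJg, ae_wM_ne_zero _,
    ae_wM_of_ae_restrict (ae_restrict_mem measurableSet_Icc)] with x hx hhx hkx hWx hJx hx0 hxI
  rw [hx, hhx, Pi.add_apply]
  rcases hx0.lt_or_gt with hneg | hpos
  · rw [indicator_of_mem (mem_Iic.2 hneg.le), hkx ⟨hxI.1, hneg.le⟩, hJx hneg, Pi.add_apply]
    ring
  · rw [indicator_of_notMem (notMem_Iic.2 hpos), hWx (mem_Ici.2 (by linarith))]
    ring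

lemma add_sub_J₀_endpoint_values (hr : AEMeasurable r (volume.restrict (Icc (-1 : ℝ) 1)))
    (hr0 : ∀ᵐ x ∂volume.restrict (Icc (-1 : ℝ) 1), r x ≠ 0)
    {W₀ W₁ : Pa r →L[ℂ] Pa r} (hW₀ : EqJ₀On W₀ {x | 1 / 2 ≤ |x|})
    (hW₁ : EqJ₀On W₁ (Ici (-(1 / 2)))) {f : Pa r} {g g' k k' G G' : ℝ → ℂ}
    (hfg : f =ᵐ[wM r (Icc (-1) 1)] g) (hg : ACOn g g' (-1) 1)
    (hW₁k : W₁ f =ᵐ[wM r (Icc (-1) 0)] k) (hk : ACOn k k' (-1) 0)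
    (hG : (W₀ + W₁ - J₀ r) f =ᵐ[wM r (Icc (-1) 1)] G) (hG' : ACOn G G' (-1) 1) :
    G (-1) = k (-1) ∧ G 1 = g 1 := by
  have hGc := hG'.continuousOn (by norm_num)
  have hsum := coeFn_add_sub_J₀ W₀ W₁ f
  constructor
  · replace hW₁k := (ae_wM_iff_of_subset measurableSet_Icc
      (Icc_subset_Icc_right zero_le_one)).1 hW₁k
    refine eqOn_of_ae_wM hr hr0 (b := -(1 / 2)) (by norm_num) (Icc_subset_Icc_right (by norm_num))
      (hGc.mono (Icc_subset_Icc_right (by norm_num)))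
      ((hk.continuousOn (by norm_num)).mono (Icc_subset_Icc_right (by norm_num))) ?_
      ⟨le_rfl, by norm_num⟩
    filter_upwards [hG, hsum, hW₀ f, hW₁k] with x hGx hx hW₀x hkx hxI
    rw [← hGx, hx, hW₀x (le_abs.2 (Or.inr (by linarith [hxI.2]))),
      hkx ⟨hxI.1, by linarith [hxI.2]⟩, add_sub_cancel_left]
  · refine eqOn_of_ae_wM hr hr0 (a := 1 / 2) (by norm_num) (Icc_subset_Icc_left (by norm_num))
      (hGc.mono (Icc_subset_Icc_left (by norm_num)))
      ((hg.continuousOn (by norm_num)).mono (Icc_subset_Icc_left (by norm_num))) ?_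
      ⟨by norm_num, le_rfl⟩
    filter_upwards [hG, hsum, hW₀ f, hW₁ f, coeFn_J₀ f, hfg] with x hGx hx hW₀x hW₁x hJx hgx hxI
    have hxpos : 0 < x := by linarith [hxI.1]
    rw [← hGx, hx, hW₀x (le_abs.2 (Or.inl hxI.1)), hW₁x (mem_Ici.2 (by linarith)), hJx, hgx,
      Real.sign_of_pos hxpos]
    push_cast
    ring

end Glue

/-- **Construction of `W₀₁` (from the proof of Theorem 5.2).** Let `P₀, P₁` be the
orthogonal projections of `L_{2,|r|}(-1,1)` onto `K₀, K₁` (i.e. multiplication by the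
indicator of `(-1/2,1/2)` resp. of its complement). Let `W₀` be bounded with
`J₀W₀ - I ≥ 0`, `W₀f = J₀f` a.e. on `1/2 ≤ |x| ≤ 1` and `W₀ F_max ⊆ F_max`, and let
`W₋₁` be bounded with `J₀W₋₁ - I ≥ 0`, `W₋₁f = J₀f` a.e. on `-1/2 ≤ x ≤ 1`,
`W₋₁ F_max ⊆ F_max[-1,0] ⊕ F_max[0,1]` and `(W₋₁f)(-1) = f(-1)` on `F_max`. Then `K₀`
and `K₁` are invariant under `W₀` and `W₋₁`, and `W₀₁ = W₀P₀ + W₋₁P₁` is bounded and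
boundedly invertible with `J₀W₀₁ - I ≥ 0` (hence `W₀₁` is positive in the Krein space),
maps `F_max` into `F_max`, and satisfies `(W₀₁f)(-1) = f(-1)`, `(W₀₁f)(1) = f(1)` on
`F_max`. -/
theorem W01_glued_operator (p q r : ℝ → ℝ) (hc : Coeffs p q r)
    (P0 P1 W0 W1 : Pa r →L[ℂ] Pa r)
    (hP0 : ∀ f : Pa r, (P0 f : ℝ → ℂ) =ᵐ[wM r (Set.Icc (-1 : ℝ) 1)]
      fun x => if x ∈ Set.Ioo (-(1 / 2) : ℝ) (1 / 2) then (f : ℝ → ℂ) x else 0)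
    (hP1 : ∀ f : Pa r, (P1 f : ℝ → ℂ) =ᵐ[wM r (Set.Icc (-1 : ℝ) 1)]
      fun x => if x ∈ Set.Ioo (-(1 / 2) : ℝ) (1 / 2) then 0 else (f : ℝ → ℂ) x)
    -- `J₀W₀ - I` is nonnegative
    (hW0nn : ∀ f : Pa r,
      (krein0 r ⇑(W0 f) ⇑f).im = 0 ∧ ‖f‖ ^ 2 ≤ (krein0 r ⇑(W0 f) ⇑f).re)
    -- `W₀ f = J₀ f` a.e. on `1/2 ≤ |x| ≤ 1`
    (hW0c : ∀ f : Pa r, ∀ᵐ x ∂(wM r (Set.Icc (-1 : ℝ) 1)),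
      1 / 2 ≤ |x| → (W0 f : ℝ → ℂ) x = ((Real.sign (r x) : ℝ) : ℂ) * (f : ℝ → ℂ) x)
    -- `W₀ F_max ⊆ F_max`
    (hW0F : ∀ f : Pa r, InFmax p r (-1) 1 ⇑f → InFmax p r (-1) 1 ⇑(W0 f))
    -- `J₀W₋₁ - I` is nonnegative
    (hW1nn : ∀ f : Pa r,
      (krein0 r ⇑(W1 f) ⇑f).im = 0 ∧ ‖f‖ ^ 2 ≤ (krein0 r ⇑(W1 f) ⇑f).re)
    -- `W₋₁ f = J₀ f` a.e. on `-1/2 ≤ x ≤ 1`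
    (hW1c : ∀ f : Pa r, ∀ᵐ x ∂(wM r (Set.Icc (-1 : ℝ) 1)),
      -(1 / 2) ≤ x → (W1 f : ℝ → ℂ) x = ((Real.sign (r x) : ℝ) : ℂ) * (f : ℝ → ℂ) x)
    -- `W₋₁ F_max ⊆ F_max[-1,0] ⊕ F_max[0,1]`
    (hW1F : ∀ f : Pa r, InFmax p r (-1) 1 ⇑f →
      InFmax p r (-1) 0 ⇑(W1 f) ∧ InFmax p r 0 1 ⇑(W1 f))
    -- `(W₋₁ f)(-1) = f(-1)` for `f ∈ F_max`
    (hW1bd : ∀ (f : Pa r) (g g' : ℝ → ℂ), (⇑f =ᵐ[wM r (Set.Icc (-1 : ℝ) 1)] g) →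
      ACOn g g' (-1) 1 →
      IntegrableOn (fun x => p x * ‖g' x‖ ^ 2) (Set.Icc (-1 : ℝ) 1) →
      ∀ G G' : ℝ → ℂ, (⇑(W1 f) =ᵐ[wM r (Set.Icc (-1 : ℝ) 0)] G) →
        ACOn G G' (-1) 0 → G (-1) = g (-1))
    (W01 : Pa r →L[ℂ] Pa r) (hW01 : W01 = W0.comp P0 + W1.comp P1) :
    -- `K₀` and `K₁` are invariant under `W₀` and `W₋₁`
    (∀ f : Pa r, InK0 r f → InK0 r (W0 f) ∧ InK0 r (W1 f)) ∧
    (∀ f : Pa r, InK1 r f → InK1 r (W0 f) ∧ InK1 r (W1 f)) ∧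
    -- `W₀₁` is boundedly invertible
    (∃ V : Pa r →L[ℂ] Pa r, W01.comp V = ContinuousLinearMap.id ℂ (Pa r) ∧
      V.comp W01 = ContinuousLinearMap.id ℂ (Pa r)) ∧
    -- `J₀W₀₁ - I` is nonnegative
    (∀ f : Pa r,
      (krein0 r ⇑(W01 f) ⇑f).im = 0 ∧ ‖f‖ ^ 2 ≤ (krein0 r ⇑(W01 f) ⇑f).re) ∧
    -- so `W₀₁` is positive in the Krein space
    (∀ f : Pa r, f ≠ 0 →
      0 < (krein0 r ⇑(W01 f) ⇑f).re ∧ (krein0 r ⇑(W01 f) ⇑f).im = 0) ∧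
    -- `W₀₁ F_max ⊆ F_max`
    (∀ f : Pa r, InFmax p r (-1) 1 ⇑f → InFmax p r (-1) 1 ⇑(W01 f)) ∧
    -- `(W₀₁ f)(±1) = f(±1)` for `f ∈ F_max`
    (∀ (f : Pa r) (g g' : ℝ → ℂ), (⇑f =ᵐ[wM r (Set.Icc (-1 : ℝ) 1)] g) →
      ACOn g g' (-1) 1 →
      IntegrableOn (fun x => p x * ‖g' x‖ ^ 2) (Set.Icc (-1 : ℝ) 1) →
      ∀ G G' : ℝ → ℂ, (⇑(W01 f) =ᵐ[wM r (Set.Icc (-1 : ℝ) 1)] G) →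
        ACOn G G' (-1) 1 → G (-1) = g (-1) ∧ G 1 = g 1) := by
  have hr := hc.aemeasurable_weight
  have hxr := hc.ae_mul_weight_pos
  have hr0 := hc.ae_weight_ne_zero
  have hJW0 := (one_le_J₀_mul_iff hr hxr W0).2 hW0nn
  have hJW1 := (one_le_J₀_mul_iff hr hxr W1).2 hW1nn
  have hW0J : EqJ₀On W0 {x | 1 / 2 ≤ |x|} := eqJ₀On_of_ae_sign hxr hW0c
  have hW1J : EqJ₀On W1 (Ici (-(1 / 2))) := eqJ₀On_of_ae_sign hxr hW1c
  have hW0K0 : EqJ₀On W0 (Ioo (-(1 / 2) : ℝ) (1 / 2))ᶜ :=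
    hW0J.mono fun x hx => not_lt.1 fun h => hx (abs_lt.1 h)
  have hW0K1 : ∀ g : Pa r, InK1 r g → W0 g = J₀ r g := fun g hg =>
    hW0K0.apply_eq_of_vanishesOn hJW0 hg
  have hW1K0 : ∀ g : Pa r, InK0 r g → W1 g = J₀ r g := fun g hg =>
    (hW1J.mono (compl_Iio (a := -(1 / 2 : ℝ))).subset).apply_eq_of_vanishesOn hJW1
      (VanishesOn.mono hg fun x hx hx' => (lt_asymm hx hx'.1).elim)
  have hW01_eq : W01 = W0 + W1 - J₀ r := hW01 ▸ comp_add_comp_eq_add_sub_J₀ hP0 hP1 hW0K1 hW1K0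
  have hJW01 : 1 ≤ J₀ r * W01 := hW01_eq ▸ one_le_J₀_mul_add_sub hJW0 hJW1
  have hnn := (one_le_J₀_mul_iff hr hxr W01).1 hJW01
  obtain ⟨u, hu⟩ := isUnit_of_one_le_J₀_mul hJW01
  refine ⟨fun f hf => ⟨hW0K0.vanishesOn hf, hW1K0 f hf ▸ VanishesOn.J₀ hf⟩,
    fun f hf => ⟨hW0K1 f hf ▸ VanishesOn.J₀ hf, (hW1J.mono fun x hx => hx.1.le).vanishesOn hf⟩,
    ⟨↑u⁻¹, by rw [← hu]; exact u.mul_inv, by rw [← hu]; exact u.inv_mul⟩, hnn,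
    fun f hf => ⟨(pow_pos (norm_pos_iff.2 hf) 2).trans_le (hnn f).2, (hnn f).1⟩,
    fun f hf => hW01_eq ▸ inFmax_add_sub_J₀ hc.ae_nonneg hc.aestronglyMeasurable hr hr0 hW1J hf
      (hW0F f hf) (hW1F f hf).1,
    fun f g g' hfg hg hgE G G' hG hG' => ?_⟩
  obtain ⟨-, k, k', hW1k, hk, -⟩ := (hW1F f ⟨Lp.memLp f, g, g', hfg, hg, hgE⟩).1
  obtain ⟨hleft, hright⟩ :=
    add_sub_J₀_endpoint_values hr hr0 hW0J hW1J hfg hg hW1k hk (hW01_eq ▸ hG) hG'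
  exact ⟨hleft.trans (hW1bd f g g' hfg hg hgE k k' hW1k hk), hright⟩

end SL
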